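/- arXiv:2204.04975 — 5 statements merged into one kernel-verified Lean document; each statement's English description precedes it below -/
import Mathlib

section
/- Let A be an associative algebra over a field k, ρ a central element of A, and ℓ_ρ ∈ Hom_{A^e}(A ⊗ A, A) the bimodule map with ℓ_ρ(1 ⊗ 1) = ρ. For a cocycle φ ∈ Hom_{A^e}(B_n(A), A) on the bar resolution, the Gerstenhaber bracket [φ, ℓ_ρ] at the chain level equals φ ∘ t_{n-1}, where t_{n-1}(a_0 ⊗ ⋯ ⊗ a_n) = Σ_{i=1}^{n} (-1)^{i-1} a_0 ⊗ ⋯ ⊗ a_{i-1} ⊗ ρ ⊗ a_i ⊗ ⋯ ⊗ a_n. -/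
open scoped TensorProduct
open PiTensorProduct

noncomputable section

/-- Extend a finite tuple to `ℕ`, by `0` out of range. -/
def extF {A : Type*} [Ring A] {m : ℕ} (a : Fin m → A) (i : ℕ) : A :=
  if h : i < m then a ⟨i, h⟩ else 0

/-- The `j`-th face of the bar differential: multiply the entries at positions `j` and `j+1`. -/
def barMul {A : Type*} [Ring A] (m j : ℕ) (a : Fin (m + 1) → A) : Fin m → A :=
  fun i => if (i : ℕ) < j then extF a i
    else if (i : ℕ) = j then extF a i * extF a (i + 1)
    else extF a ((i : ℕ) + 1)

/-- Insert the element `ρ` at position `p` of a tuple. -/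
def insAt {A : Type*} [Ring A] (ρ : A) (m p : ℕ) (a : Fin m → A) : Fin (m + 1) → A :=
  fun i => if (i : ℕ) < p then extF a i
    else if (i : ℕ) = p then ρ
    else extF a ((i : ℕ) - 1)

/-- Cap a tuple of length `m+1` with the unit `1` on both ends, giving a tuple of length `m+3`. -/
def capOne {A : Type*} [Ring A] (m : ℕ) (b : Fin (m + 1) → A) : Fin (m + 3) → A :=
  fun i => if (i : ℕ) = 0 then 1
    else if (i : ℕ) = m + 2 then 1
    else extF b ((i : ℕ) - 1)

/-- Let `A` be an algebra over a field `k`, `ρ` a central element, and `ℓ_ρ` the bimodule map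
`A ⊗ A → A` with `ℓ_ρ(1 ⊗ 1) = ρ`.  For a cocycle `φ ∈ Hom_{A^e}(B_n(A), A)` with `n = m + 1`,
the Gerstenhaber bracket `[φ, ℓ_ρ]` at the chain level (transported to bimodule maps via the
isomorphisms `F`, `G`, so that `[φ, ℓ_ρ](a_0 ⊗ ⋯ ⊗ a_n) =
a_0 · (Σ_{i=1}^n (-1)^{i-1} F(φ)(a_1 ⊗ ⋯ ⊗ a_{i-1} ⊗ ρ ⊗ a_i ⊗ ⋯ ⊗ a_{n-1})) · a_n`)
coincides with `φ ∘ t_{n-1}`, where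
`t_{n-1}(a_0 ⊗ ⋯ ⊗ a_n) = Σ_{i=1}^n (-1)^{i-1} a_0 ⊗ ⋯ ⊗ a_{i-1} ⊗ ρ ⊗ a_i ⊗ ⋯ ⊗ a_n`. -/
theorem bracket_with_central_degree_zero {k A : Type*} [Field k] [Ring A] [Algebra k A]
    (m : ℕ) (ρ : A) (hρ : ∀ x : A, ρ * x = x * ρ)
    (φ : (⨂[k] (_ : Fin (m + 3)), A) →ₗ[k] A)
    -- `φ` is a morphism of `A`-bimodules
    (hbi : ∀ (x y : A) (a : Fin (m + 3) → A),
      φ (tprod k (fun i => if (i : ℕ) = 0 then x * a i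
        else if (i : ℕ) = m + 2 then a i * y else a i)) = x * φ (tprod k a) * y)
    -- `φ` is a cocycle: it vanishes on the image of the bar differential `d_{n+1}`
    (d : (⨂[k] (_ : Fin (m + 4)), A) →ₗ[k] (⨂[k] (_ : Fin (m + 3)), A))
    (hd : ∀ a : Fin (m + 4) → A,
      d (tprod k a) = ∑ j ∈ Finset.range (m + 3), ((-1 : k) ^ j) • tprod k (barMul (m + 3) j a))
    (hcoc : φ.comp d = 0)
    -- the map `t_{n-1} : B_{n-1}(A) → B_n(A)`
    (t : (⨂[k] (_ : Fin (m + 2)), A) →ₗ[k] (⨂[k] (_ : Fin (m + 3)), A))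
    (ht : ∀ a : Fin (m + 2) → A,
      t (tprod k a)
        = ∑ j ∈ Finset.range (m + 1), ((-1 : k) ^ j) • tprod k (insAt ρ (m + 2) (j + 1) a))
    -- the chain-level Gerstenhaber bracket `[φ, ℓ_ρ]`
    (br : (⨂[k] (_ : Fin (m + 2)), A) →ₗ[k] A)
    (hbr : ∀ a : Fin (m + 2) → A,
      br (tprod k a)
        = a 0 * (∑ i ∈ Finset.range (m + 1), ((-1 : k) ^ i) •
            φ (tprod k (capOne m (insAt ρ m i (fun j : Fin m => extF a ((j : ℕ) + 1))))))
          * a (Fin.last (m + 1))) :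
    br = φ.comp t := by
  apply PiTensorProduct.ext
  apply MultilinearMap.ext
  intro a
  simp only [LinearMap.compMultilinearMap_apply, LinearMap.comp_apply]
  rw [hbr, ht, map_sum]
  simp only [map_smul]
  rw [Finset.mul_sum, Finset.sum_mul]
  refine Finset.sum_congr rfl fun i hi => ?_
  rw [mul_smul_comm, smul_mul_assoc]
  congr 1
  rw [← hbi (a 0) (a (Fin.last (m + 1)))]
  refine congrArg φ (congrArg (PiTensorProduct.tprod k) ?_)
  funext j
  have hi' : i < m + 1 := Finset.mem_range.mp hi
  have hj : (j : ℕ) < m + 3 := j.isLt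
  simp only [capOne, insAt, extF, Fin.last, Fin.val_mk, Fin.val_zero]
  split_ifs
  all_goals try simp only [mul_one, one_mul]
  all_goals first
    | rfl
    | omega
    | (congr 1; exact Fin.ext (by simp only [Fin.val_mk, Fin.val_zero]; omega))
end
end

section
/- The Fomin–Kirillov algebra FK(3) over a field k of characteristic ≠ 2, 3 — the quotient of the free algebra k⟨a,b,c⟩ by the two-sided ideal generated by a², b², c², ab+bc+ca, and ba+ac+cb — has dimension 12 over k, with basis {1, a, b, c, ab, bc, ba, ac, aba, abc, bac, abac}. -/
noncomputable section

open FreeAlgebra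

/-- The defining relations of the Fomin–Kirillov algebra `FK(3)`:
`a², b², c², ab+bc+ca, ba+ac+cb` (as a relation identifying them with `0`). -/
inductive FKRel (k : Type*) [Field k] : FreeAlgebra k (Fin 3) → FreeAlgebra k (Fin 3) → Prop
  | ra : FKRel k (ι k 0 * ι k 0) 0
  | rb : FKRel k (ι k 1 * ι k 1) 0
  | rc : FKRel k (ι k 2 * ι k 2) 0
  | r1 : FKRel k (ι k 0 * ι k 1 + ι k 1 * ι k 2 + ι k 2 * ι k 0) 0
  | r2 : FKRel k (ι k 1 * ι k 0 + ι k 0 * ι k 2 + ι k 2 * ι k 1) 0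

/-- The Fomin–Kirillov algebra `FK(3) = k⟨a,b,c⟩/(a², b², c², ab+bc+ca, ba+ac+cb)`. -/
abbrev FK (k : Type*) [Field k] := RingQuot (FKRel k)

variable (k : Type*) [Field k]

/-- The generator `a` of `FK(3)`. -/
def fa : FK k := RingQuot.mkAlgHom k (FKRel k) (ι k 0)

/-- The generator `b` of `FK(3)`. -/
def fb : FK k := RingQuot.mkAlgHom k (FKRel k) (ι k 1)

/-- The generator `c` of `FK(3)`. -/
def fc : FK k := RingQuot.mkAlgHom k (FKRel k) (ι k 2)

/-- The 12 monomials `1, a, b, c, ab, bc, ba, ac, aba, abc, bac, abac` in `FK(3)`. -/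
def fkBasisFun : Fin 12 → FK k :=
  ![1, fa k, fb k, fc k,
    fa k * fb k, fb k * fc k, fb k * fa k, fa k * fc k,
    fa k * fb k * fa k, fa k * fb k * fc k, fb k * fa k * fc k,
    fa k * fb k * fa k * fc k]


open Matrix

/-! ### Relations in `FK(3)` -/

lemma rel_a : fa k * fa k = 0 := by
  have := RingQuot.mkAlgHom_rel k (FKRel.ra (k := k))
  simpa [fa, _root_.map_mul, _root_.map_zero] using this

lemma rel_b : fb k * fb k = 0 := by
  have := RingQuot.mkAlgHom_rel k (FKRel.rb (k := k))
  simpa [fb, _root_.map_mul, _root_.map_zero] using this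

lemma rel_c : fc k * fc k = 0 := by
  have := RingQuot.mkAlgHom_rel k (FKRel.rc (k := k))
  simpa [fc, _root_.map_mul, _root_.map_zero] using this

lemma rel_A : fa k * fb k + fb k * fc k + fc k * fa k = 0 := by
  have := RingQuot.mkAlgHom_rel k (FKRel.r1 (k := k))
  simpa [fa, fb, fc, _root_.map_mul, _root_.map_add, _root_.map_zero] using this

lemma rel_B : fb k * fa k + fa k * fc k + fc k * fb k = 0 := by
  have := RingQuot.mkAlgHom_rel k (FKRel.r2 (k := k))
  simpa [fa, fb, fc, _root_.map_mul, _root_.map_add, _root_.map_zero] using this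

/-! ### Multiplication table -/

lemma mul_a_1 : fa k * (fa k) = 0 := rel_a k

lemma mul_a_2 : fa k * (fb k) = (fa k * fb k) := by
  noncomm_ring

lemma mul_a_3 : fa k * (fc k) = (fa k * fc k) := by
  noncomm_ring

lemma mul_a_4 : fa k * (fa k * fb k) = 0 := by
  have key : fa k * (fa k * fb k) - (0) = (fa k * fa k) * fb k := by noncomm_ring
  rw [rel_a k] at key
  try simp only [mul_zero, zero_mul, add_zero, zero_add, neg_zero, sub_zero] at key
  exact key

lemma mul_a_5 : fa k * (fb k * fc k) = (fa k * fb k * fc k) := by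
  noncomm_ring

lemma mul_a_6 : fa k * (fb k * fa k) = (fa k * fb k * fa k) := by
  noncomm_ring

lemma mul_a_7 : fa k * (fa k * fc k) = 0 := by
  have key : fa k * (fa k * fc k) - (0) = (fa k * fa k) * fc k := by noncomm_ring
  rw [rel_a k] at key
  try simp only [mul_zero, zero_mul, add_zero, zero_add, neg_zero, sub_zero] at key
  exact key

lemma mul_a_8 : fa k * (fa k * fb k * fa k) = 0 := by
  have key : fa k * (fa k * fb k * fa k) - (0) = (fa k * fa k) * fb k * fa k := by noncomm_ring
  rw [rel_a k] at key
  try simp only [mul_zero, zero_mul, add_zero, zero_add, neg_zero, sub_zero] at key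
  exact key

lemma mul_a_9 : fa k * (fa k * fb k * fc k) = 0 := by
  have key : fa k * (fa k * fb k * fc k) - (0) = (fa k * fa k) * fb k * fc k := by noncomm_ring
  rw [rel_a k] at key
  try simp only [mul_zero, zero_mul, add_zero, zero_add, neg_zero, sub_zero] at key
  exact key

lemma mul_a_10 : fa k * (fb k * fa k * fc k) = (fa k * fb k * fa k * fc k) := by
  noncomm_ring

lemma mul_a_11 : fa k * (fa k * fb k * fa k * fc k) = 0 := by
  have key : fa k * (fa k * fb k * fa k * fc k) - (0) = (fa k * fa k) * fb k * fa k * fc k := by noncomm_ring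
  rw [rel_a k] at key
  try simp only [mul_zero, zero_mul, add_zero, zero_add, neg_zero, sub_zero] at key
  exact key

lemma mul_b_1 : fb k * (fa k) = (fb k * fa k) := by
  noncomm_ring

lemma mul_b_2 : fb k * (fb k) = 0 := rel_b k

lemma mul_b_3 : fb k * (fc k) = (fb k * fc k) := by
  noncomm_ring

lemma mul_b_4 : fb k * (fa k * fb k) = (fa k * fb k * fa k) := by
  have key : fb k * (fa k * fb k) - ((fa k * fb k * fa k)) = -((fb k * fb k) * fc k) - ((fa k * fb k + fb k * fc k + fc k * fa k) * fa k) + fb k * (fa k * fb k + fb k * fc k + fc k * fa k) + fc k * (fa k * fa k) := by noncomm_ring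
  rw [rel_a k, rel_b k, rel_A k] at key
  try simp only [mul_zero, zero_mul, add_zero, zero_add, neg_zero, sub_zero] at key
  exact sub_eq_zero.mp key

lemma mul_b_5 : fb k * (fb k * fc k) = 0 := by
  have key : fb k * (fb k * fc k) - (0) = (fb k * fb k) * fc k := by noncomm_ring
  rw [rel_b k] at key
  try simp only [mul_zero, zero_mul, add_zero, zero_add, neg_zero, sub_zero] at key
  exact key

lemma mul_b_6 : fb k * (fb k * fa k) = 0 := by
  have key : fb k * (fb k * fa k) - (0) = (fb k * fb k) * fa k := by noncomm_ring
  rw [rel_b k] at key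
  try simp only [mul_zero, zero_mul, add_zero, zero_add, neg_zero, sub_zero] at key
  exact key

lemma mul_b_7 : fb k * (fa k * fc k) = (fb k * fa k * fc k) := by
  noncomm_ring

lemma mul_b_8 : fb k * (fa k * fb k * fa k) = 0 := by
  have key : fb k * (fa k * fb k * fa k) - (0) = -((fb k * fb k) * fc k * fa k) + fb k * (fa k * fb k + fb k * fc k + fc k * fa k) * fa k - (fb k * fc k * (fa k * fa k)) := by noncomm_ring
  rw [rel_a k, rel_b k, rel_A k] at key
  try simp only [mul_zero, zero_mul, add_zero, zero_add, neg_zero, sub_zero] at key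
  exact key

lemma mul_b_9 : fb k * (fa k * fb k * fc k) = (fa k * fb k * fa k * fc k) := by
  have key : fb k * (fa k * fb k * fc k) - ((fa k * fb k * fa k * fc k)) = -((fb k * fb k) * fc k * fc k) - ((fa k * fb k + fb k * fc k + fc k * fa k) * fa k * fc k) + fb k * (fa k * fb k + fb k * fc k + fc k * fa k) * fc k + fc k * (fa k * fa k) * fc k := by noncomm_ring
  rw [rel_a k, rel_b k, rel_A k] at key
  try simp only [mul_zero, zero_mul, add_zero, zero_add, neg_zero, sub_zero] at key
  exact sub_eq_zero.mp key

lemma mul_b_10 : fb k * (fb k * fa k * fc k) = 0 := by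
  have key : fb k * (fb k * fa k * fc k) - (0) = (fb k * fb k) * fa k * fc k := by noncomm_ring
  rw [rel_b k] at key
  try simp only [mul_zero, zero_mul, add_zero, zero_add, neg_zero, sub_zero] at key
  exact key

lemma mul_b_11 : fb k * (fa k * fb k * fa k * fc k) = 0 := by
  have key : fb k * (fa k * fb k * fa k * fc k) - (0) = -((fb k * fb k) * fc k * fa k * fc k) + fb k * (fa k * fb k + fb k * fc k + fc k * fa k) * fa k * fc k - (fb k * fc k * (fa k * fa k) * fc k) := by noncomm_ring
  rw [rel_a k, rel_b k, rel_A k] at key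
  try simp only [mul_zero, zero_mul, add_zero, zero_add, neg_zero, sub_zero] at key
  exact key

lemma mul_c_1 : fc k * (fa k) = -(fa k * fb k) - (fb k * fc k) := by
  have key : fc k * (fa k) - (-(fa k * fb k) - (fb k * fc k)) = (fa k * fb k + fb k * fc k + fc k * fa k) := by noncomm_ring
  rw [rel_A k] at key
  try simp only [mul_zero, zero_mul, add_zero, zero_add, neg_zero, sub_zero] at key
  exact sub_eq_zero.mp key

lemma mul_c_2 : fc k * (fb k) = -(fb k * fa k) - (fa k * fc k) := by
  have key : fc k * (fb k) - (-(fb k * fa k) - (fa k * fc k)) = (fb k * fa k + fa k * fc k + fc k * fb k) := by noncomm_ring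
  rw [rel_B k] at key
  try simp only [mul_zero, zero_mul, add_zero, zero_add, neg_zero, sub_zero] at key
  exact sub_eq_zero.mp key

lemma mul_c_3 : fc k * (fc k) = 0 := rel_c k

lemma mul_c_4 : fc k * (fa k * fb k) = (fb k * fa k * fc k) := by
  have key : fc k * (fa k * fb k) - ((fb k * fa k * fc k)) = -((fc k * fc k) * fa k) - ((fb k * fa k + fa k * fc k + fc k * fb k) * fc k) + fa k * (fc k * fc k) + fc k * (fa k * fb k + fb k * fc k + fc k * fa k) := by noncomm_ring
  rw [rel_c k, rel_A k, rel_B k] at key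
  try simp only [mul_zero, zero_mul, add_zero, zero_add, neg_zero, sub_zero] at key
  exact sub_eq_zero.mp key

lemma mul_c_5 : fc k * (fb k * fc k) = -(fb k * fa k * fc k) := by
  have key : fc k * (fb k * fc k) - (-(fb k * fa k * fc k)) = (fb k * fa k + fa k * fc k + fc k * fb k) * fc k - (fa k * (fc k * fc k)) := by noncomm_ring
  rw [rel_c k, rel_B k] at key
  try simp only [mul_zero, zero_mul, add_zero, zero_add, neg_zero, sub_zero] at key
  exact sub_eq_zero.mp key

lemma mul_c_6 : fc k * (fb k * fa k) = (fa k * fb k * fc k) := by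
  have key : fc k * (fb k * fa k) - ((fa k * fb k * fc k)) = (fa k * fa k) * fb k + (fb k * fa k + fa k * fc k + fc k * fb k) * fa k - (fa k * (fa k * fb k + fb k * fc k + fc k * fa k)) - (fb k * (fa k * fa k)) := by noncomm_ring
  rw [rel_a k, rel_A k, rel_B k] at key
  try simp only [mul_zero, zero_mul, add_zero, zero_add, neg_zero, sub_zero] at key
  exact sub_eq_zero.mp key

lemma mul_c_7 : fc k * (fa k * fc k) = -(fa k * fb k * fc k) := by
  have key : fc k * (fa k * fc k) - (-(fa k * fb k * fc k)) = (fa k * fb k + fb k * fc k + fc k * fa k) * fc k - (fb k * (fc k * fc k)) := by noncomm_ring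
  rw [rel_c k, rel_A k] at key
  try simp only [mul_zero, zero_mul, add_zero, zero_add, neg_zero, sub_zero] at key
  exact sub_eq_zero.mp key

lemma mul_c_8 : fc k * (fa k * fb k * fa k) = -(fa k * fb k * fa k * fc k) := by
  have key : fc k * (fa k * fb k * fa k) - (-(fa k * fb k * fa k * fc k)) = (fb k * fb k) * fc k * fc k + (fa k * fb k + fb k * fc k + fc k * fa k) * fa k * fc k + (fb k * fa k + fa k * fc k + fc k * fb k) * fa k * fb k + (fb k * fa k + fa k * fc k + fc k * fb k) * fb k * fc k + fa k * (fc k * fc k) * fa k - (fa k * fc k * (fa k * fb k + fb k * fc k + fc k * fa k)) - (fb k * (fa k * fa k) * fb k) - (fb k * (fa k * fb k + fb k * fc k + fc k * fa k) * fc k) - (fc k * (fa k * fa k) * fc k) + fc k * (fa k * fb k + fb k * fc k + fc k * fa k) * fa k - (fc k * fb k * (fa k * fb k + fb k * fc k + fc k * fa k)) - (fc k * fc k * (fa k * fa k)) := by noncomm_ring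
  rw [rel_a k, rel_b k, rel_c k, rel_A k, rel_B k] at key
  try simp only [mul_zero, zero_mul, add_zero, zero_add, neg_zero, sub_zero] at key
  exact sub_eq_zero.mp key

lemma mul_c_9 : fc k * (fa k * fb k * fc k) = 0 := by
  have key : fc k * (fa k * fb k * fc k) - (0) = -((fc k * fc k) * fa k * fc k) + fc k * (fa k * fb k + fb k * fc k + fc k * fa k) * fc k - (fc k * fb k * (fc k * fc k)) := by noncomm_ring
  rw [rel_c k, rel_A k] at key
  try simp only [mul_zero, zero_mul, add_zero, zero_add, neg_zero, sub_zero] at key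
  exact key

lemma mul_c_10 : fc k * (fb k * fa k * fc k) = 0 := by
  have key : fc k * (fb k * fa k * fc k) - (0) = (fa k * fa k) * fb k * fc k + (fb k * fa k + fa k * fc k + fc k * fb k) * fa k * fc k - (fa k * (fa k * fb k + fb k * fc k + fc k * fa k) * fc k) + fa k * fb k * (fc k * fc k) - (fb k * (fa k * fa k) * fc k) := by noncomm_ring
  rw [rel_a k, rel_c k, rel_A k, rel_B k] at key
  try simp only [mul_zero, zero_mul, add_zero, zero_add, neg_zero, sub_zero] at key
  exact key

lemma mul_c_11 : fc k * (fa k * fb k * fa k * fc k) = 0 := by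
  have key : fc k * (fa k * fb k * fa k * fc k) - (0) = (fb k * fa k + fa k * fc k + fc k * fb k) * fa k * fb k * fc k + fa k * (fc k * fc k) * fa k * fc k - (fa k * fc k * (fa k * fb k + fb k * fc k + fc k * fa k) * fc k) + fa k * fc k * fb k * (fc k * fc k) - (fb k * (fa k * fa k) * fb k * fc k) + fc k * (fb k * fb k) * fc k * fc k + fc k * (fa k * fb k + fb k * fc k + fc k * fa k) * fa k * fc k - (fc k * fb k * (fa k * fb k + fb k * fc k + fc k * fa k) * fc k) - (fc k * fc k * (fa k * fa k) * fc k) := by noncomm_ring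
  rw [rel_a k, rel_b k, rel_c k, rel_A k, rel_B k] at key
  try simp only [mul_zero, zero_mul, add_zero, zero_add, neg_zero, sub_zero] at key
  exact key


/-! ### Spanning -/

lemma fk_span : Submodule.span k (Set.range (fkBasisFun k)) = ⊤ := by
  set S := Submodule.span k (Set.range (fkBasisFun k)) with hSdef
  have hj : ∀ j : Fin 12, fkBasisFun k j ∈ S := fun j => Submodule.subset_span ⟨j, rfl⟩
  have h1S : (1 : FK k) ∈ S := hj 0
  have hmulgen : ∀ g : FK k, (∀ j : Fin 12, g * fkBasisFun k j ∈ S) →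
      ∀ s ∈ S, g * s ∈ S := by
    intro g hg s hs
    induction hs using Submodule.span_induction with
    | mem x hx => obtain ⟨j, rfl⟩ := hx; exact hg j
    | zero => rw [mul_zero]; exact Submodule.zero_mem S
    | add x y hx hy ihx ihy => rw [mul_add]; exact Submodule.add_mem S ihx ihy
    | smul a x hx ih => rw [mul_smul_comm]; exact Submodule.smul_mem S a ih
  have hgen : ∀ x : FreeAlgebra k (Fin 3), ∀ s ∈ S,
      RingQuot.mkAlgHom k (FKRel k) x * s ∈ S := by
    intro x
    refine FreeAlgebra.induction k (Fin 3)
      (motive := fun x => ∀ s ∈ S, RingQuot.mkAlgHom k (FKRel k) x * s ∈ S) ?_ ?_ ?_ ?_ x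
    · intro r s hs
      rw [AlgHom.commutes, ← Algebra.smul_def]
      exact Submodule.smul_mem S r hs
    · intro i
      fin_cases i
      · refine hmulgen _ ?_
        intro j
        fin_cases j
        · show fa k * 1 ∈ S
          rw [mul_one]; exact hj 1
        · show fa k * (fa k) ∈ S
          rw [mul_a_1 k]
          exact Submodule.zero_mem S
        · show fa k * (fb k) ∈ S
          rw [mul_a_2 k]
          exact hj 4
        · show fa k * (fc k) ∈ S
          rw [mul_a_3 k]
          exact hj 7
        · show fa k * (fa k * fb k) ∈ S
          rw [mul_a_4 k]
          exact Submodule.zero_mem S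
        · show fa k * (fb k * fc k) ∈ S
          rw [mul_a_5 k]
          exact hj 9
        · show fa k * (fb k * fa k) ∈ S
          rw [mul_a_6 k]
          exact hj 8
        · show fa k * (fa k * fc k) ∈ S
          rw [mul_a_7 k]
          exact Submodule.zero_mem S
        · show fa k * (fa k * fb k * fa k) ∈ S
          rw [mul_a_8 k]
          exact Submodule.zero_mem S
        · show fa k * (fa k * fb k * fc k) ∈ S
          rw [mul_a_9 k]
          exact Submodule.zero_mem S
        · show fa k * (fb k * fa k * fc k) ∈ S
          rw [mul_a_10 k]
          exact hj 11
        · show fa k * (fa k * fb k * fa k * fc k) ∈ S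
          rw [mul_a_11 k]
          exact Submodule.zero_mem S
      · refine hmulgen _ ?_
        intro j
        fin_cases j
        · show fb k * 1 ∈ S
          rw [mul_one]; exact hj 2
        · show fb k * (fa k) ∈ S
          rw [mul_b_1 k]
          exact hj 6
        · show fb k * (fb k) ∈ S
          rw [mul_b_2 k]
          exact Submodule.zero_mem S
        · show fb k * (fc k) ∈ S
          rw [mul_b_3 k]
          exact hj 5
        · show fb k * (fa k * fb k) ∈ S
          rw [mul_b_4 k]
          exact hj 8
        · show fb k * (fb k * fc k) ∈ S
          rw [mul_b_5 k]
          exact Submodule.zero_mem S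
        · show fb k * (fb k * fa k) ∈ S
          rw [mul_b_6 k]
          exact Submodule.zero_mem S
        · show fb k * (fa k * fc k) ∈ S
          rw [mul_b_7 k]
          exact hj 10
        · show fb k * (fa k * fb k * fa k) ∈ S
          rw [mul_b_8 k]
          exact Submodule.zero_mem S
        · show fb k * (fa k * fb k * fc k) ∈ S
          rw [mul_b_9 k]
          exact hj 11
        · show fb k * (fb k * fa k * fc k) ∈ S
          rw [mul_b_10 k]
          exact Submodule.zero_mem S
        · show fb k * (fa k * fb k * fa k * fc k) ∈ S
          rw [mul_b_11 k]
          exact Submodule.zero_mem S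
      · refine hmulgen _ ?_
        intro j
        fin_cases j
        · show fc k * 1 ∈ S
          rw [mul_one]; exact hj 3
        · show fc k * (fa k) ∈ S
          rw [mul_c_1 k]
          exact Submodule.sub_mem S (Submodule.neg_mem S (hj 4)) (hj 5)
        · show fc k * (fb k) ∈ S
          rw [mul_c_2 k]
          exact Submodule.sub_mem S (Submodule.neg_mem S (hj 6)) (hj 7)
        · show fc k * (fc k) ∈ S
          rw [mul_c_3 k]
          exact Submodule.zero_mem S
        · show fc k * (fa k * fb k) ∈ S
          rw [mul_c_4 k]
          exact hj 10
        · show fc k * (fb k * fc k) ∈ S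
          rw [mul_c_5 k]
          exact Submodule.neg_mem S (hj 10)
        · show fc k * (fb k * fa k) ∈ S
          rw [mul_c_6 k]
          exact hj 9
        · show fc k * (fa k * fc k) ∈ S
          rw [mul_c_7 k]
          exact Submodule.neg_mem S (hj 9)
        · show fc k * (fa k * fb k * fa k) ∈ S
          rw [mul_c_8 k]
          exact Submodule.neg_mem S (hj 11)
        · show fc k * (fa k * fb k * fc k) ∈ S
          rw [mul_c_9 k]
          exact Submodule.zero_mem S
        · show fc k * (fb k * fa k * fc k) ∈ S
          rw [mul_c_10 k]
          exact Submodule.zero_mem S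
        · show fc k * (fa k * fb k * fa k * fc k) ∈ S
          rw [mul_c_11 k]
          exact Submodule.zero_mem S
    · intro x y ihx ihy s hs
      rw [_root_.map_mul, mul_assoc]
      exact ihx _ (ihy s hs)
    · intro x y ihx ihy s hs
      rw [_root_.map_add, add_mul]
      exact Submodule.add_mem S (ihx s hs) (ihy s hs)
  refine le_antisymm le_top ?_
  intro x _
  obtain ⟨y, rfl⟩ := RingQuot.mkAlgHom_surjective k (FKRel k) x
  simpa [mul_one] using hgen y 1 h1S

/-! ### The regular representation over `ℤ` -/

def Az : Matrix (Fin 12) (Fin 12) ℤ :=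
  !![0, 0, 0, 0, 0, 0, 0, 0, 0, 0, 0, 0;
   1, 0, 0, 0, 0, 0, 0, 0, 0, 0, 0, 0;
   0, 0, 0, 0, 0, 0, 0, 0, 0, 0, 0, 0;
   0, 0, 0, 0, 0, 0, 0, 0, 0, 0, 0, 0;
   0, 0, 1, 0, 0, 0, 0, 0, 0, 0, 0, 0;
   0, 0, 0, 0, 0, 0, 0, 0, 0, 0, 0, 0;
   0, 0, 0, 0, 0, 0, 0, 0, 0, 0, 0, 0;
   0, 0, 0, 1, 0, 0, 0, 0, 0, 0, 0, 0;
   0, 0, 0, 0, 0, 0, 1, 0, 0, 0, 0, 0;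
   0, 0, 0, 0, 0, 1, 0, 0, 0, 0, 0, 0;
   0, 0, 0, 0, 0, 0, 0, 0, 0, 0, 0, 0;
   0, 0, 0, 0, 0, 0, 0, 0, 0, 0, 1, 0]
def Bz : Matrix (Fin 12) (Fin 12) ℤ :=
  !![0, 0, 0, 0, 0, 0, 0, 0, 0, 0, 0, 0;
   0, 0, 0, 0, 0, 0, 0, 0, 0, 0, 0, 0;
   1, 0, 0, 0, 0, 0, 0, 0, 0, 0, 0, 0;
   0, 0, 0, 0, 0, 0, 0, 0, 0, 0, 0, 0;
   0, 0, 0, 0, 0, 0, 0, 0, 0, 0, 0, 0;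
   0, 0, 0, 1, 0, 0, 0, 0, 0, 0, 0, 0;
   0, 1, 0, 0, 0, 0, 0, 0, 0, 0, 0, 0;
   0, 0, 0, 0, 0, 0, 0, 0, 0, 0, 0, 0;
   0, 0, 0, 0, 1, 0, 0, 0, 0, 0, 0, 0;
   0, 0, 0, 0, 0, 0, 0, 0, 0, 0, 0, 0;
   0, 0, 0, 0, 0, 0, 0, 1, 0, 0, 0, 0;
   0, 0, 0, 0, 0, 0, 0, 0, 0, 1, 0, 0]
def Cz : Matrix (Fin 12) (Fin 12) ℤ :=
  !![0, 0, 0, 0, 0, 0, 0, 0, 0, 0, 0, 0;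
   0, 0, 0, 0, 0, 0, 0, 0, 0, 0, 0, 0;
   0, 0, 0, 0, 0, 0, 0, 0, 0, 0, 0, 0;
   1, 0, 0, 0, 0, 0, 0, 0, 0, 0, 0, 0;
   0, -1, 0, 0, 0, 0, 0, 0, 0, 0, 0, 0;
   0, -1, 0, 0, 0, 0, 0, 0, 0, 0, 0, 0;
   0, 0, -1, 0, 0, 0, 0, 0, 0, 0, 0, 0;
   0, 0, -1, 0, 0, 0, 0, 0, 0, 0, 0, 0;
   0, 0, 0, 0, 0, 0, 0, 0, 0, 0, 0, 0;
   0, 0, 0, 0, 0, 0, 1, -1, 0, 0, 0, 0;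
   0, 0, 0, 0, 1, -1, 0, 0, 0, 0, 0, 0;
   0, 0, 0, 0, 0, 0, 0, 0, -1, 0, 0, 0]

lemma relz_a : Az * Az = 0 := by decide
lemma relz_b : Bz * Bz = 0 := by decide
lemma relz_c : Cz * Cz = 0 := by decide
lemma relz_A : Az * Bz + Bz * Cz + Cz * Az = 0 := by decide
lemma relz_B : Bz * Az + Az * Cz + Cz * Bz = 0 := by decide

lemma colz_1 : Az *ᵥ (Pi.single (0 : Fin 12) (1 : ℤ)) = Pi.single 1 1 := by decide

lemma colz_2 : Bz *ᵥ (Pi.single (0 : Fin 12) (1 : ℤ)) = Pi.single 2 1 := by decide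

lemma colz_3 : Cz *ᵥ (Pi.single (0 : Fin 12) (1 : ℤ)) = Pi.single 3 1 := by decide

lemma colz_4 : Az *ᵥ (Bz *ᵥ (Pi.single (0 : Fin 12) (1 : ℤ))) = Pi.single 4 1 := by decide

lemma colz_5 : Bz *ᵥ (Cz *ᵥ (Pi.single (0 : Fin 12) (1 : ℤ))) = Pi.single 5 1 := by decide

lemma colz_6 : Bz *ᵥ (Az *ᵥ (Pi.single (0 : Fin 12) (1 : ℤ))) = Pi.single 6 1 := by decide

lemma colz_7 : Az *ᵥ (Cz *ᵥ (Pi.single (0 : Fin 12) (1 : ℤ))) = Pi.single 7 1 := by decide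

lemma colz_8 : Az *ᵥ (Bz *ᵥ (Az *ᵥ (Pi.single (0 : Fin 12) (1 : ℤ)))) = Pi.single 8 1 := by decide

lemma colz_9 : Az *ᵥ (Bz *ᵥ (Cz *ᵥ (Pi.single (0 : Fin 12) (1 : ℤ)))) = Pi.single 9 1 := by decide

lemma colz_10 : Bz *ᵥ (Az *ᵥ (Cz *ᵥ (Pi.single (0 : Fin 12) (1 : ℤ)))) = Pi.single 10 1 := by decide

lemma colz_11 : Az *ᵥ (Bz *ᵥ (Az *ᵥ (Cz *ᵥ (Pi.single (0 : Fin 12) (1 : ℤ))))) = Pi.single 11 1 := by decide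


/-! ### The representation over `k` -/

def Ak : Matrix (Fin 12) (Fin 12) k := (Int.castRingHom k).mapMatrix Az
def Bk : Matrix (Fin 12) (Fin 12) k := (Int.castRingHom k).mapMatrix Bz
def Ck : Matrix (Fin 12) (Fin 12) k := (Int.castRingHom k).mapMatrix Cz

lemma relk_a : Ak k * Ak k = 0 := by
  have := congrArg ((Int.castRingHom k).mapMatrix) relz_a
  simpa [Ak, _root_.map_mul] using this

lemma relk_b : Bk k * Bk k = 0 := by
  have := congrArg ((Int.castRingHom k).mapMatrix) relz_b
  simpa [Bk, _root_.map_mul] using this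

lemma relk_c : Ck k * Ck k = 0 := by
  have := congrArg ((Int.castRingHom k).mapMatrix) relz_c
  simpa [Ck, _root_.map_mul] using this

lemma relk_A : Ak k * Bk k + Bk k * Ck k + Ck k * Ak k = 0 := by
  have := congrArg ((Int.castRingHom k).mapMatrix) relz_A
  simpa [Ak, Bk, Ck, _root_.map_mul, _root_.map_add] using this

lemma relk_B : Bk k * Ak k + Ak k * Ck k + Ck k * Bk k = 0 := by
  have := congrArg ((Int.castRingHom k).mapMatrix) relz_B
  simpa [Ak, Bk, Ck, _root_.map_mul, _root_.map_add] using this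

def fkRepAux : FreeAlgebra k (Fin 3) →ₐ[k] Matrix (Fin 12) (Fin 12) k :=
  FreeAlgebra.lift k ![Ak k, Bk k, Ck k]

lemma fkRepAux_rel : ∀ ⦃x y : FreeAlgebra k (Fin 3)⦄, FKRel k x y → fkRepAux k x = fkRepAux k y := by
  intro x y h
  cases h with
  | ra => simp only [_root_.map_mul, _root_.map_zero, fkRepAux, FreeAlgebra.lift_ι_apply]; exact relk_a k
  | rb => simp only [_root_.map_mul, _root_.map_zero, fkRepAux, FreeAlgebra.lift_ι_apply]; exact relk_b k
  | rc => simp only [_root_.map_mul, _root_.map_zero, fkRepAux, FreeAlgebra.lift_ι_apply]; exact relk_c k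
  | r1 => simp only [_root_.map_mul, _root_.map_add, _root_.map_zero, fkRepAux, FreeAlgebra.lift_ι_apply]; exact relk_A k
  | r2 => simp only [_root_.map_mul, _root_.map_add, _root_.map_zero, fkRepAux, FreeAlgebra.lift_ι_apply]; exact relk_B k

def fkRep : FK k →ₐ[k] Matrix (Fin 12) (Fin 12) k :=
  RingQuot.liftAlgHom k ⟨fkRepAux k, fkRepAux_rel k⟩

lemma fkRep_a : fkRep k (fa k) = (Int.castRingHom k).mapMatrix Az := by
  have := RingQuot.liftAlgHom_mkAlgHom_apply k (fkRepAux k) (fkRepAux_rel k) (ι k 0)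
  simpa [fkRep, fa, fkRepAux, FreeAlgebra.lift_ι_apply, Ak] using this

lemma fkRep_b : fkRep k (fb k) = (Int.castRingHom k).mapMatrix Bz := by
  have := RingQuot.liftAlgHom_mkAlgHom_apply k (fkRepAux k) (fkRepAux_rel k) (ι k 1)
  simpa [fkRep, fb, fkRepAux, FreeAlgebra.lift_ι_apply, Bk] using this

lemma fkRep_c : fkRep k (fc k) = (Int.castRingHom k).mapMatrix Cz := by
  have := RingQuot.liftAlgHom_mkAlgHom_apply k (fkRepAux k) (fkRepAux_rel k) (ι k 2)
  simpa [fkRep, fc, fkRepAux, FreeAlgebra.lift_ι_apply, Ck] using this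

/-! ### Linear independence via the representation -/

def castVec (v : Fin 12 → ℤ) : Fin 12 → k := fun j => (v j : k)

lemma mulVec_cast (M : Matrix (Fin 12) (Fin 12) ℤ) (v : Fin 12 → ℤ) :
    ((Int.castRingHom k).mapMatrix M) *ᵥ castVec k v = castVec k (M *ᵥ v) := by
  funext j
  simp only [castVec, Matrix.mulVec, dotProduct, RingHom.mapMatrix_apply,
    Matrix.map_apply, Int.coe_castRingHom]
  norm_cast

lemma castVec_single (i : Fin 12) : castVec k (Pi.single i 1) = Pi.single i 1 := by
  funext j
  simp [castVec, Pi.single_apply, apply_ite (fun n : ℤ => (n : k))]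

def fkCoord : FK k →ₗ[k] (Fin 12 → k) where
  toFun x := (fkRep k x) *ᵥ Pi.single 0 1
  map_add' x y := by simp [_root_.map_add, Matrix.add_mulVec]; rfl
  map_smul' a x := by simp [_root_.map_smul, Matrix.smul_mulVec]; rfl

lemma fkCoord_basis (i : Fin 12) : fkCoord k (fkBasisFun k i) = Pi.single i 1 := by
  fin_cases i
  · show (fkRep k 1) *ᵥ Pi.single 0 1 = Pi.single 0 1
    rw [_root_.map_one, Matrix.one_mulVec]
  · show (fkRep k (fa k)) *ᵥ Pi.single 0 1 = Pi.single 1 1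
    rw [fkRep_a, ← castVec_single k 0, mulVec_cast, colz_1, castVec_single]
  · show (fkRep k (fb k)) *ᵥ Pi.single 0 1 = Pi.single 2 1
    rw [fkRep_b, ← castVec_single k 0, mulVec_cast, colz_2, castVec_single]
  · show (fkRep k (fc k)) *ᵥ Pi.single 0 1 = Pi.single 3 1
    rw [fkRep_c, ← castVec_single k 0, mulVec_cast, colz_3, castVec_single]
  · show (fkRep k (fa k * fb k)) *ᵥ Pi.single 0 1 = Pi.single 4 1
    rw [_root_.map_mul, fkRep_a, fkRep_b, ← castVec_single k 0, ← Matrix.mulVec_mulVec, mulVec_cast, mulVec_cast, colz_4, castVec_single]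
  · show (fkRep k (fb k * fc k)) *ᵥ Pi.single 0 1 = Pi.single 5 1
    rw [_root_.map_mul, fkRep_b, fkRep_c, ← castVec_single k 0, ← Matrix.mulVec_mulVec, mulVec_cast, mulVec_cast, colz_5, castVec_single]
  · show (fkRep k (fb k * fa k)) *ᵥ Pi.single 0 1 = Pi.single 6 1
    rw [_root_.map_mul, fkRep_b, fkRep_a, ← castVec_single k 0, ← Matrix.mulVec_mulVec, mulVec_cast, mulVec_cast, colz_6, castVec_single]
  · show (fkRep k (fa k * fc k)) *ᵥ Pi.single 0 1 = Pi.single 7 1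
    rw [_root_.map_mul, fkRep_a, fkRep_c, ← castVec_single k 0, ← Matrix.mulVec_mulVec, mulVec_cast, mulVec_cast, colz_7, castVec_single]
  · show (fkRep k (fa k * fb k * fa k)) *ᵥ Pi.single 0 1 = Pi.single 8 1
    rw [_root_.map_mul, _root_.map_mul, fkRep_a, fkRep_b, ← castVec_single k 0, ← Matrix.mulVec_mulVec, ← Matrix.mulVec_mulVec, mulVec_cast, mulVec_cast, mulVec_cast, colz_8, castVec_single]
  · show (fkRep k (fa k * fb k * fc k)) *ᵥ Pi.single 0 1 = Pi.single 9 1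
    rw [_root_.map_mul, _root_.map_mul, fkRep_a, fkRep_b, fkRep_c, ← castVec_single k 0, ← Matrix.mulVec_mulVec, ← Matrix.mulVec_mulVec, mulVec_cast, mulVec_cast, mulVec_cast, colz_9, castVec_single]
  · show (fkRep k (fb k * fa k * fc k)) *ᵥ Pi.single 0 1 = Pi.single 10 1
    rw [_root_.map_mul, _root_.map_mul, fkRep_b, fkRep_a, fkRep_c, ← castVec_single k 0, ← Matrix.mulVec_mulVec, ← Matrix.mulVec_mulVec, mulVec_cast, mulVec_cast, mulVec_cast, colz_10, castVec_single]
  · show (fkRep k (fa k * fb k * fa k * fc k)) *ᵥ Pi.single 0 1 = Pi.single 11 1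
    rw [_root_.map_mul, _root_.map_mul, _root_.map_mul, fkRep_a, fkRep_b, fkRep_c, ← castVec_single k 0, ← Matrix.mulVec_mulVec, ← Matrix.mulVec_mulVec, ← Matrix.mulVec_mulVec, mulVec_cast, mulVec_cast, mulVec_cast, mulVec_cast, colz_11, castVec_single]

lemma fk_linearIndependent : LinearIndependent k (fkBasisFun k) := by
  apply LinearIndependent.of_comp (fkCoord k)
  have : ⇑(fkCoord k) ∘ fkBasisFun k = fun i : Fin 12 => (Pi.single i 1 : Fin 12 → k) := by
    funext i
    exact fkCoord_basis k i
  rw [this]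
  have h := (Pi.basisFun k (Fin 12)).linearIndependent
  have e : ⇑(Pi.basisFun k (Fin 12)) = fun i : Fin 12 => (Pi.single i 1 : Fin 12 → k) :=
    funext fun i => Pi.basisFun_apply k (Fin 12) i
  rwa [e] at h

/-- The Fomin–Kirillov algebra `FK(3)` over a field `k` of characteristic `≠ 2, 3` has
dimension `12` over `k`, with basis `{1, a, b, c, ab, bc, ba, ac, aba, abc, bac, abac}`. -/
theorem fk3_dimension_twelve (h2 : (2 : k) ≠ 0) (h3 : (3 : k) ≠ 0) :
    Module.finrank k (FK k) = 12 ∧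
    LinearIndependent k (fkBasisFun k) ∧
    Submodule.span k (Set.range (fkBasisFun k)) = ⊤ := by
  refine ⟨?_, fk_linearIndependent k, fk_span k⟩
  have b : Module.Basis (Fin 12) k (FK k) :=
    Module.Basis.mk (fk_linearIndependent k) (by rw [fk_span k])
  rw [Module.finrank_eq_card_basis b, Fintype.card_fin]
end
end

section
/- In the Fomin–Kirillov algebra FK(3) over a field of characteristic ≠ 2,3, the elements ab + ba, ab + bc − ac, and abac all lie in the center Z(FK(3)); i.e., each of them commutes with the generators a, b, and c. -/
noncomputable section

open FreeAlgebra

variable (k : Type*) [Field k]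

/-- Elements commuting with all three generators are central. -/
theorem fk3_central_of_comm_gens (z : FK k)
    (hA : z * fa k = fa k * z) (hB : z * fb k = fb k * z) (hC : z * fc k = fc k * z) :
    ∀ x : FK k, z * x = x * z := by
  intro x
  obtain ⟨y, rfl⟩ := RingQuot.mkAlgHom_surjective k (FKRel k) x
  induction y using FreeAlgebra.induction with
  | grade0 r =>
      rw [AlgHom.commutes]
      exact (Algebra.commutes r z).symm
  | grade1 i =>
      fin_cases i
      · exact hA
      · exact hB
      · exact hC
  | mul u v hu hv =>
      rw [map_mul, ← mul_assoc, hu, mul_assoc, hv, mul_assoc]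
  | add u v hu hv =>
      rw [map_add, mul_add, add_mul, hu, hv]

/-- In the Fomin–Kirillov algebra `FK(3)` over a field of characteristic `≠ 2, 3`, the elements
`ab + ba`, `ab + bc − ac` and `abac` all lie in the center `Z(FK(3))`. -/
theorem fk3_central_elements (h2 : (2 : k) ≠ 0) (h3 : (3 : k) ≠ 0) :
    (∀ x : FK k, (fa k * fb k + fb k * fa k) * x = x * (fa k * fb k + fb k * fa k)) ∧
    (∀ x : FK k, (fa k * fb k + fb k * fc k - fa k * fc k) * x
      = x * (fa k * fb k + fb k * fc k - fa k * fc k)) ∧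
    (∀ x : FK k, (fa k * fb k * fa k * fc k) * x = x * (fa k * fb k * fa k * fc k)) := by
  set A := fa k with hAdef
  set B := fb k with hBdef
  set C := fc k with hCdef
  have hP : A * A = 0 := by
    have := RingQuot.mkAlgHom_rel k (FKRel.ra (k := k))
    simpa [hAdef, fa, map_mul] using this
  have hQ : B * B = 0 := by
    have := RingQuot.mkAlgHom_rel k (FKRel.rb (k := k))
    simpa [hBdef, fb, map_mul] using this
  have hR : C * C = 0 := by
    have := RingQuot.mkAlgHom_rel k (FKRel.rc (k := k))
    simpa [hCdef, fc, map_mul] using this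
  have hS : A * B + B * C + C * A = 0 := by
    have := RingQuot.mkAlgHom_rel k (FKRel.r1 (k := k))
    simpa [hAdef, hBdef, hCdef, fa, fb, fc, map_mul, map_add] using this
  have hT : B * A + A * C + C * B = 0 := by
    have := RingQuot.mkAlgHom_rel k (FKRel.r2 (k := k))
    simpa [hAdef, hBdef, hCdef, fa, fb, fc, map_mul, map_add] using this
  refine ⟨?_, ?_, ?_⟩
  · apply fk3_central_of_comm_gens
    · have key : (A*B + B*A)*A + (A*A)*B
          = A*(A*B + B*A) + B*(A*A) := by noncomm_ring
      simp only [hP, hQ, hR, hS, hT] at key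
      simpa [← hAdef, ← hBdef, ← hCdef] using key
    · have key : (A*B + B*A)*B + (B*B)*A
          = B*(A*B + B*A) + A*(B*B) := by noncomm_ring
      simp only [hP, hQ, hR, hS, hT] at key
      simpa [← hAdef, ← hBdef, ← hCdef] using key
    · have key : (A*B + B*A)*C + A*(C*C) + B*(C*C) + C*(A*B + B*C + C*A) + C*(B*A + A*C + C*B)
          = C*(A*B + B*A) + (A*B + B*C + C*A)*C + (B*A + A*C + C*B)*C + (C*C)*B + (C*C)*A := by noncomm_ring
      simp only [hP, hQ, hR, hS, hT] at key
      simpa [← hAdef, ← hBdef, ← hCdef] using key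
  · apply fk3_central_of_comm_gens
    · simp only [← hAdef, ← hBdef, ← hCdef]
      rw [sub_mul, mul_sub, sub_eq_sub_iff_add_eq_add]
      have key : (A*B + B*C)*A + A*(A*C) + (A*A)*B + (A*B + B*C + C*A)*C + C*(A*A) + (B*A + A*C + C*B)*A + (C*C)*B
          = A*(A*B + B*C) + (A*C)*A + (A*A)*C + (A*B + B*C + C*A)*A + B*(C*C) + C*(B*A + A*C + C*B) + B*(A*A) := by noncomm_ring
      simp only [hP, hQ, hR, hS, hT] at key
      simpa [← hAdef, ← hBdef, ← hCdef] using key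
    · simp only [← hAdef, ← hBdef, ← hCdef]
      rw [sub_mul, mul_sub, sub_eq_sub_iff_add_eq_add]
      have key : (A*B + B*C)*B + B*(A*C) + (B*A + A*C + C*B)*B + (B*B)*C + A*(C*C) + C*(A*B + B*C + C*A)
          = B*(A*B + B*C) + (A*C)*B + (A*B + B*C + C*A)*B + C*(B*B) + (B*A + A*C + C*B)*C + (C*C)*A := by noncomm_ring
      simp only [hP, hQ, hR, hS, hT] at key
      simpa [← hAdef, ← hBdef, ← hCdef] using key
    · simp only [← hAdef, ← hBdef, ← hCdef]
      rw [sub_mul, mul_sub, sub_eq_sub_iff_add_eq_add]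
      have key : (A*B + B*C)*C + C*(A*C) + A*(C*C) + C*(A*B + B*C + C*A)
          = C*(A*B + B*C) + (A*C)*C + (A*B + B*C + C*A)*C + (C*C)*A := by noncomm_ring
      simp only [hP, hQ, hR, hS, hT] at key
      simpa [← hAdef, ← hBdef, ← hCdef] using key
  · apply fk3_central_of_comm_gens
    · have key : (A*B*A*C)*A + (A*A)*B*A*C + B*C*(B*A + A*C + C*B)*A + B*B*(A*A)*A + (B*A + A*C + C*B)*C*A*A + C*(A*A)*C*A
          = A*(A*B*A*C) + (A*B + B*C + C*A)*A*C*A + B*(B*A + A*C + C*B)*A*A + B*(C*C)*B*A + A*(C*C)*A*A + C*B*C*(A*A) := by noncomm_ring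
      simp only [hP, hQ, hR, hS, hT] at key
      simpa [← hAdef, ← hBdef, ← hCdef] using key
    · have key : (A*B*A*C)*B + (B*A + A*C + C*B)*B*A*C + A*C*A*(C*C) + A*(C*C)*B*C + B*C*(B*A + A*C + C*B)*B + B*B*(A*A)*B + (B*A + A*C + C*B)*C*A*B + C*(A*A)*C*B + C*(A*B + B*C + C*A)*B*C + A*(B*B)*B*C + B*C*(B*B)*C + C*B*(C*C)*A
          = B*(A*B*A*C) + (A*B + B*C + C*A)*A*C*B + A*C*(B*A + A*C + C*B)*C + B*(B*A + A*C + C*B)*A*B + B*(C*C)*B*B + A*(C*C)*A*B + C*(B*B)*A*C + C*B*C*(A*B + B*C + C*A) + (A*B + B*C + C*A)*B*B*C + (C*C)*A*B*C := by noncomm_ring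
      simp only [hP, hQ, hR, hS, hT] at key
      simpa [← hAdef, ← hBdef, ← hCdef] using key
    · have key : (A*B*A*C)*C + B*C*A*(C*C) + B*C*A*(C*C) + C*(A*A)*C*C + (A*B + B*C + C*A)*B*A*C + B*(C*C)*B*C
          = C*(A*B*A*C) + (A*B + B*C + C*A)*A*C*C + A*(B*B)*A*C + B*C*(B*A + A*C + C*B)*C := by noncomm_ring
      simp only [hP, hQ, hR, hS, hT] at key
      simpa [← hAdef, ← hBdef, ← hCdef] using key
end
end

section
/- Let k be a field of characteristic ≠ 2, 3. The linear map ρ : FK(3) → FK(3) defined on the generators by ρ(a) = bac, ρ(b) = 0, ρ(c) = 0 extends to a well-defined derivation of FK(3); that is, the assignment respects the defining relations a², b², c², ab+bc+ca, ba+ac+cb (each relation is mapped to 0 by the induced derivation of the free algebra). -/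
noncomputable section

open FreeAlgebra

variable (k : Type*) [Field k]

section aux

variable {R : Type*} [Ring R] {A B C : R}

lemma key1 (hA : A*A=0) (hB : B*B=0) (hC : C*C=0)
    (h1 : A*B+B*C+C*A=0) (h2 : B*A+A*C+C*B=0) : A*(B*A*C) + (B*A*C)*A = 0 := by
  have e : A*(B*A*C) + (B*A*C)*A =
      -(B*(A*A)*B) - C*(A*A)*C + (B*B)*(C*C) + (A*B+B*C+C*A)*(A*C)
        - B*(A*B+B*C+C*A)*C + B*A*(A*B+B*C+C*A) := by noncomm_ring
  rw [hA, hB, hC, h1] at e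
  simpa using e

lemma key2 (hA : A*A=0) (hB : B*B=0) (hC : C*C=0)
    (h1 : A*B+B*C+C*A=0) (h2 : B*A+A*C+C*B=0) : (B*A*C)*B + C*(B*A*C) = 0 := by
  have e : (B*A*C)*B + C*(B*A*C) =
      (A*A)*(B*C) - B*(A*A)*C + C*A*(B*B) + (C*C)*(A*B) - A*(C*C)*B + A*B*(C*C)
        - A*(A*B+B*C+C*A)*C - C*(A*B+B*C+C*A)*B + (B*A+A*C+C*B)*(A*C)
        + (B*A+A*C+C*B)*(C*B) := by noncomm_ring
  rw [hA, hB, hC, h1, h2] at e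
  simpa using e

lemma key3 (hB : B*B=0) (hC : C*C=0) : B*(B*A*C) + (B*A*C)*C = 0 := by
  have e : B*(B*A*C) + (B*A*C)*C = (B*B)*(A*C) + B*A*(C*C) := by noncomm_ring
  rw [hB, hC] at e
  simpa using e

end aux

/-- Over a field `k` of characteristic `≠ 2, 3`, the assignment `a ↦ bac`, `b ↦ 0`, `c ↦ 0`
extends to a well-defined derivation `ρ` of the Fomin–Kirillov algebra `FK(3)`. -/
theorem fk3_derivation_a_to_bac (h2 : (2 : k) ≠ 0) (h3 : (3 : k) ≠ 0) :
    ∃ ρ : FK k →ₗ[k] FK k,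
      (∀ x y : FK k, ρ (x * y) = ρ x * y + x * ρ y) ∧
      ρ (fa k) = fb k * fa k * fc k ∧ ρ (fb k) = 0 ∧ ρ (fc k) = 0 := by
  classical
  set A := fa k with hAdef
  set B := fb k with hBdef
  set C := fc k with hCdef
  have hA : A * A = 0 := by
    simpa [hAdef, fa, map_mul] using RingQuot.mkAlgHom_rel k (FKRel.ra (k := k))
  have hB : B * B = 0 := by
    simpa [hBdef, fb, map_mul] using RingQuot.mkAlgHom_rel k (FKRel.rb (k := k))
  have hC : C * C = 0 := by
    simpa [hCdef, fc, map_mul] using RingQuot.mkAlgHom_rel k (FKRel.rc (k := k))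
  have h1 : A*B + B*C + C*A = 0 := by
    simpa [hAdef, hBdef, hCdef, fa, fb, fc, map_mul, map_add] using RingQuot.mkAlgHom_rel k (FKRel.r1 (k := k))
  have hr2 : B*A + A*C + C*B = 0 := by
    simpa [hAdef, hBdef, hCdef, fa, fb, fc, map_mul, map_add] using RingQuot.mkAlgHom_rel k (FKRel.r2 (k := k))
  -- the algebra hom into the trivial square-zero extension
  let D : FK k := B * A * C
  let f : Fin 3 → TrivSqZeroExt (FK k) (FK k) :=
    ![TrivSqZeroExt.inl A + TrivSqZeroExt.inr D, TrivSqZeroExt.inl B, TrivSqZeroExt.inl C]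
  let Φ : FreeAlgebra k (Fin 3) →ₐ[k] TrivSqZeroExt (FK k) (FK k) := FreeAlgebra.lift k f
  have hΦι : ∀ i, Φ (ι k i) = f i := fun i => by simp [Φ]
  have hrel : ∀ ⦃x y⦄, FKRel k x y → Φ x = Φ y := by
    intro x y h
    cases h with
    | ra =>
        simp only [map_mul, map_zero, hΦι]
        show (TrivSqZeroExt.inl A + TrivSqZeroExt.inr D) *
          (TrivSqZeroExt.inl A + TrivSqZeroExt.inr D) = 0
        ext
        · simp [TrivSqZeroExt.fst_mul, hA]
        · simp only [TrivSqZeroExt.snd_mul, TrivSqZeroExt.snd_add, TrivSqZeroExt.fst_add,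
            TrivSqZeroExt.fst_inl, TrivSqZeroExt.fst_inr, TrivSqZeroExt.snd_inl,
            TrivSqZeroExt.snd_inr, TrivSqZeroExt.snd_zero, add_zero, zero_add, smul_eq_mul,
            MulOpposite.smul_eq_mul_unop, MulOpposite.unop_op]
          simpa [D] using key1 hA hB hC h1 hr2
    | rb =>
        simp only [map_mul, map_zero, hΦι]
        show TrivSqZeroExt.inl B * TrivSqZeroExt.inl B = 0
        rw [TrivSqZeroExt.inl_mul_inl, hB, TrivSqZeroExt.inl_zero]
    | rc =>
        simp only [map_mul, map_zero, hΦι]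
        show TrivSqZeroExt.inl C * TrivSqZeroExt.inl C = 0
        rw [TrivSqZeroExt.inl_mul_inl, hC, TrivSqZeroExt.inl_zero]
    | r1 =>
        simp only [map_mul, map_add, map_zero, hΦι]
        show (TrivSqZeroExt.inl A + TrivSqZeroExt.inr D) * TrivSqZeroExt.inl B
          + TrivSqZeroExt.inl B * TrivSqZeroExt.inl C
          + TrivSqZeroExt.inl C * (TrivSqZeroExt.inl A + TrivSqZeroExt.inr D) = 0
        ext
        · simp [TrivSqZeroExt.fst_mul, h1]
        · simp only [TrivSqZeroExt.snd_mul, TrivSqZeroExt.snd_add, TrivSqZeroExt.fst_add,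
            TrivSqZeroExt.fst_mul, TrivSqZeroExt.fst_inl, TrivSqZeroExt.fst_inr,
            TrivSqZeroExt.snd_inl, TrivSqZeroExt.snd_inr, TrivSqZeroExt.snd_zero, add_zero,
            zero_add, smul_eq_mul, smul_zero, MulOpposite.smul_eq_mul_unop, MulOpposite.unop_op]
          simpa [D] using key2 hA hB hC h1 hr2
    | r2 =>
        simp only [map_mul, map_add, map_zero, hΦι]
        show TrivSqZeroExt.inl B * (TrivSqZeroExt.inl A + TrivSqZeroExt.inr D)
          + (TrivSqZeroExt.inl A + TrivSqZeroExt.inr D) * TrivSqZeroExt.inl C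
          + TrivSqZeroExt.inl C * TrivSqZeroExt.inl B = 0
        ext
        · simp [TrivSqZeroExt.fst_mul, hr2]
        · simp only [TrivSqZeroExt.snd_mul, TrivSqZeroExt.snd_add, TrivSqZeroExt.fst_add,
            TrivSqZeroExt.fst_mul, TrivSqZeroExt.fst_inl, TrivSqZeroExt.fst_inr,
            TrivSqZeroExt.snd_inl, TrivSqZeroExt.snd_inr, TrivSqZeroExt.snd_zero, add_zero,
            zero_add, smul_eq_mul, smul_zero, MulOpposite.smul_eq_mul_unop, MulOpposite.unop_op]
          simpa [D] using key3 (A := A) hB hC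
  let Ψ : FK k →ₐ[k] TrivSqZeroExt (FK k) (FK k) := RingQuot.liftAlgHom k ⟨Φ, hrel⟩
  have hΨmk : ∀ x, Ψ (RingQuot.mkAlgHom k (FKRel k) x) = Φ x := fun x =>
    RingQuot.liftAlgHom_mkAlgHom_apply k Φ hrel x
  -- first component is the identity
  have hfst : ∀ x : FK k, (Ψ x).fst = x := by
    have : (TrivSqZeroExt.fstHom k (FK k) (FK k)).comp Ψ = AlgHom.id k (FK k) := by
      apply RingQuot.ringQuot_ext'
      apply FreeAlgebra.hom_ext
      funext i
      simp only [AlgHom.comp_apply, Function.comp_apply, AlgHom.coe_comp, AlgHom.id_comp]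
      fin_cases i <;>
        simp [Ψ, hΨmk, hΦι, f, TrivSqZeroExt.fstHom_apply, hAdef, hBdef, hCdef, fa, fb, fc]
    exact fun x => AlgHom.congr_fun this x
  refine ⟨{ toFun := fun x => (Ψ x).snd
            map_add' := fun x y => by simp [map_add, TrivSqZeroExt.snd_add]
            map_smul' := fun r x => by simp [map_smul, TrivSqZeroExt.snd_smul] }, ?_, ?_, ?_, ?_⟩
  · intro x y
    simp only [LinearMap.coe_mk, AddHom.coe_mk, map_mul, TrivSqZeroExt.snd_mul, hfst,
      smul_eq_mul, MulOpposite.smul_eq_mul_unop, MulOpposite.unop_op]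
    rw [add_comm]
  · show (Ψ (fa k)).snd = fb k * fa k * fc k
    simp [fa, fb, fc, hΨmk, hΦι, f, D, hAdef, hBdef, hCdef]
  · show (Ψ (fb k)).snd = 0
    simp [fb, hΨmk, hΦι, f]
  · show (Ψ (fc k)).snd = 0
    simp [fc, hΨmk, hΦι, f]
end
end

section
/- Let A = FK(3) over a field of characteristic ≠ 2, 3, and let ρ = ab + ba ∈ Z(A). For the element x = a we have ρ·a − a·ρ = 0, and more generally ρ commutes with a, b, c, so ρ is central; moreover ρ² = (ab+ba)² = 0 in FK(3). -/
noncomputable section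

open FreeAlgebra

variable (k : Type*) [Field k]

section Aux
variable {R : Type*} [Ring R]

private lemma fk_aux (a b c : R)
    (ha : a * a = 0) (hb : b * b = 0) (hc : c * c = 0)
    (h1 : a * b + b * c + c * a = 0) (h2 : b * a + a * c + c * b = 0) :
    (a * b + b * a) * a = a * (a * b + b * a) ∧
    (a * b + b * a) * b = b * (a * b + b * a) ∧
    (a * b + b * a) * c = c * (a * b + b * a) ∧
    (a * b + b * a) * (a * b + b * a) = 0 := by
  have hab : a * b = -(b * c + c * a) := by
    rw [eq_neg_iff_add_eq_zero, ← add_assoc]; exact h1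
  have hba : b * a = -(a * c + c * b) := by
    rw [eq_neg_iff_add_eq_zero, ← add_assoc]; exact h2
  refine ⟨?_, ?_, ?_, ?_⟩
  · have l1 : (a * b + b * a) * a = a * b * a := by
      rw [add_mul, mul_assoc b a a, ha, mul_zero, add_zero]
    have l2 : a * (a * b + b * a) = a * b * a := by
      rw [mul_add, ← mul_assoc a a b, ha, zero_mul, zero_add, ← mul_assoc]
    rw [l1, l2]
  · have l1 : (a * b + b * a) * b = b * a * b := by
      rw [add_mul, mul_assoc a b b, hb, mul_zero, zero_add]
    have l2 : b * (a * b + b * a) = b * a * b := by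
      rw [mul_add, ← mul_assoc b b a, hb, zero_mul, add_zero, ← mul_assoc]
    rw [l1, l2]
  · have habc : a * b * c = -(c * a * c) := by
      rw [hab, neg_mul, add_mul, mul_assoc b c c, hc, mul_zero, zero_add]
    have hbac : b * a * c = -(c * b * c) := by
      rw [hba, neg_mul, add_mul, mul_assoc a c c, hc, mul_zero, zero_add]
    have hcab : c * (a * b) = -(c * b * c) := by
      rw [hab, mul_neg, mul_add, ← mul_assoc, ← mul_assoc c c a, hc, zero_mul, add_zero]
    have hcba : c * (b * a) = -(c * a * c) := by
      rw [hba, mul_neg, mul_add, ← mul_assoc, ← mul_assoc c c b, hc, zero_mul, add_zero]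
    calc (a * b + b * a) * c = a * b * c + b * a * c := by noncomm_ring
      _ = -(c * a * c) + -(c * b * c) := by rw [habc, hbac]
      _ = c * (b * a) + c * (a * b) := by rw [hcab, hcba]
      _ = c * (a * b + b * a) := by noncomm_ring
  · have hbab : b * a * b = -(a * c * b) := by
      rw [hba, neg_mul, add_mul, mul_assoc c b b, hb, mul_zero, add_zero]
    have haba : a * b * a = -(b * c * a) := by
      rw [hab, neg_mul, add_mul, mul_assoc c a a, ha, mul_zero, add_zero]
    have habab : a * (b * a * b) = 0 := by
      rw [hbab, mul_neg, neg_eq_zero,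
        show a * (a * c * b) = (a * a) * (c * b) by noncomm_ring, ha, zero_mul]
    have hbaba : b * (a * b * a) = 0 := by
      rw [haba, mul_neg, neg_eq_zero,
        show b * (b * c * a) = (b * b) * (c * a) by noncomm_ring, hb, zero_mul]
    have e : (a * b + b * a) * (a * b + b * a) =
        a * (b * a * b) + a * (b * b) * a + b * (a * a) * b + b * (a * b * a) := by
      noncomm_ring
    rw [e, habab, hbaba, ha, hb, mul_zero, zero_mul, mul_zero]
    simp

private lemma mul_comm_aux (p x y : R) (hx : p * x = x * p) (hy : p * y = y * p) :
    p * (x * y) = x * y * p := by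
  rw [← mul_assoc, hx, mul_assoc, hy, mul_assoc]

private lemma add_comm_aux (p x y : R) (hx : p * x = x * p) (hy : p * y = y * p) :
    p * (x + y) = (x + y) * p := by
  rw [mul_add, hx, hy, add_mul]

end Aux

/-- Let `A = FK(3)` over a field of characteristic `≠ 2, 3` and `ρ = ab + ba`.  Then
`ρ·a − a·ρ = 0`, and more generally `ρ` commutes with `a`, `b`, `c` and with every element of
`A`, so `ρ` is central; moreover `ρ² = (ab+ba)² = 0` in `FK(3)`. -/
theorem fk3_ab_plus_ba_central_square_zero (h2 : (2 : k) ≠ 0) (h3 : (3 : k) ≠ 0) :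
    (fa k * fb k + fb k * fa k) * fa k - fa k * (fa k * fb k + fb k * fa k) = 0 ∧
    (fa k * fb k + fb k * fa k) * fa k = fa k * (fa k * fb k + fb k * fa k) ∧
    (fa k * fb k + fb k * fa k) * fb k = fb k * (fa k * fb k + fb k * fa k) ∧
    (fa k * fb k + fb k * fa k) * fc k = fc k * (fa k * fb k + fb k * fa k) ∧
    (∀ x : FK k, (fa k * fb k + fb k * fa k) * x = x * (fa k * fb k + fb k * fa k)) ∧
    (fa k * fb k + fb k * fa k) * (fa k * fb k + fb k * fa k) = 0 := by
  have rel : ∀ {x y : FreeAlgebra k (Fin 3)}, FKRel k x y →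
      RingQuot.mkAlgHom k (FKRel k) x = RingQuot.mkAlgHom k (FKRel k) y :=
    fun h => RingQuot.mkAlgHom_rel k h
  have ha : fa k * fa k = 0 := by
    have := rel (FKRel.ra (k := k)); simpa [fa, map_mul] using this
  have hb : fb k * fb k = 0 := by
    have := rel (FKRel.rb (k := k)); simpa [fb, map_mul] using this
  have hc : fc k * fc k = 0 := by
    have := rel (FKRel.rc (k := k)); simpa [fc, map_mul] using this
  have h1 : fa k * fb k + fb k * fc k + fc k * fa k = 0 := by
    have := rel (FKRel.r1 (k := k))
    simpa [fa, fb, fc, map_mul, map_add] using this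
  have h2' : fb k * fa k + fa k * fc k + fc k * fb k = 0 := by
    have := rel (FKRel.r2 (k := k))
    simpa [fa, fb, fc, map_mul, map_add] using this
  obtain ⟨ga, gb, gc, sq⟩ := fk_aux (fa k) (fb k) (fc k) ha hb hc h1 h2'
  have central : ∀ x : FK k,
      (fa k * fb k + fb k * fa k) * x = x * (fa k * fb k + fb k * fa k) := by
    intro x
    obtain ⟨y, rfl⟩ := RingQuot.mkAlgHom_surjective k (FKRel k) x
    induction y using FreeAlgebra.induction with
    | grade0 r =>
        rw [AlgHom.commutes]
        exact (Algebra.commutes r (fa k * fb k + fb k * fa k)).symm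
    | grade1 i =>
        fin_cases i
        · exact ga
        · exact gb
        · exact gc
    | mul x y hx hy =>
        rw [map_mul]
        exact mul_comm_aux _ _ _ hx hy
    | add x y hx hy =>
        rw [map_add]
        exact add_comm_aux _ _ _ hx hy
  exact ⟨sub_eq_zero_of_eq ga, ga, gb, gc, central, sq⟩
end
end
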